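/- Let α be a type and let c : ℕ → List α be a sequence of chains satisfying the bounded displacement property with some bound dis : ℕ, and suppose c has unbounded lengths. Then pruning the second half of every chain yields eventually pairwise prefix-comparable chains: there exists N such that for all n, m ≥ N, ((c n).take ((c n).length / 2)) is a prefix of ((c m).take ((c m).length / 2)), or ((c m).take ((c m).length / 2)) is a prefix of ((c n).take ((c n).length / 2)). (This is the core of the forward direction of the paper's Theorem 2: unknown bounded displacement eventual prefix consistency yields the eventual strong prefix property.) -/

import Mathlib

/-!
Bounded displacement says that the prefix of `c n` lying more than `dis` blocks below its tip
is a prefix of every later chain. In particular chain lengths never drop by more than `dis`, so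
once some chain is longer than `3 * dis`, every later chain has length at least `2 * dis`, and
the first half of such a chain lies entirely in its stable prefix. The first halves of `c n`
and `c m` (`n ≤ m`) are then both prefixes of `c m`, hence comparable.
-/

/-- The sequence of chains `c` satisfies the bounded displacement property
with bound `dis`. -/
def BoundedDisplacement {α : Type*} (c : ℕ → List α) (dis : ℕ) : Prop :=
  ∀ n m, n ≤ m → ∀ i, i + dis < (c n).length → (c n)[i]? = (c m)[i]?

namespace BoundedDisplacement

variable {α : Type*} {c : ℕ → List α} {dis n m : ℕ}

theorem take_prefix (h : BoundedDisplacement c dis) (hnm : n ≤ m) {k : ℕ}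
    (hk : k + dis ≤ (c n).length) : (c n).take k <+: c m := by
  refine List.prefix_iff_getElem?.mpr fun i hi => ?_
  rw [List.length_take] at hi
  rw [← h n m hnm i (by omega), ← List.getElem?_take_of_lt (lt_of_lt_of_le hi (min_le_left _ _)),
    List.getElem?_eq_getElem]

theorem length_sub_le (h : BoundedDisplacement c dis) (hnm : n ≤ m) :
    (c n).length - dis ≤ (c m).length := by
  by_cases hdis : dis ≤ (c n).length
  · simpa using (h.take_prefix hnm (k := (c n).length - dis) (by omega)).length_le
  · omega

theorem take_half_prefix_or (h : BoundedDisplacement c dis) (hnm : n ≤ m)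
    (hlen : 2 * dis ≤ (c n).length) :
    ((c n).take ((c n).length / 2)) <+: ((c m).take ((c m).length / 2)) ∨
    ((c m).take ((c m).length / 2)) <+: ((c n).take ((c n).length / 2)) :=
  List.prefix_or_prefix_of_prefix (h.take_prefix hnm (by omega)) (List.take_prefix _ _)

end BoundedDisplacement

theorem unknown_bounded_displacement_eventual_strong_prefix {α : Type*}
    (c : ℕ → List α) (dis : ℕ)
    (hbd : BoundedDisplacement c dis)
    (hub : ∀ k : ℕ, ∃ n, k < (c n).length) :
    ∃ N, ∀ n m, N ≤ n → N ≤ m →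
      ((c n).take ((c n).length / 2)) <+: ((c m).take ((c m).length / 2)) ∨
      ((c m).take ((c m).length / 2)) <+: ((c n).take ((c n).length / 2)) := by
  obtain ⟨N, hN⟩ := hub (3 * dis)
  have hlong : ∀ n, N ≤ n → 2 * dis ≤ (c n).length := fun n hn => by
    have := hbd.length_sub_le hn
    omega
  refine ⟨N, fun n m hn hm => ?_⟩
  rcases le_total n m with hnm | hmn
  · exact hbd.take_half_prefix_or hnm (hlong n hn)
  · exact (hbd.take_half_prefix_or hmn (hlong m hm)).symm
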